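/- arXiv:2011.04144 — 2 statements merged into one kernel-verified Lean document; each statement's English description precedes it below -/
import Mathlib

section
/- Let Σ be a finite set, P a probability mass function on Σⁿ with P(x) > 0 for all x, and T a tree on vertex set {1,…,n} with a fixed root r and parent map pa. Define the T-structured distribution P_T by P_T(x) := P_r(x_r)·∏_{v≠r} P_{(pa(v),v)}(x_{pa(v)}, x_v)/P_{pa(v)}(x_{pa(v)}). Then D(P‖P_T) = (Σ_{v=1}^{n} H(P_v) − H(P)) − Σ_{\{u,v\} ∈ E(T)} I(X_u; X_v), where E(T) is the edge set of T. -/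
open scoped Classical

noncomputable section

/-- Marginal of a pmf on `Σⁿ` at coordinate `v`. -/
def marg {n : ℕ} {α : Type*} [Fintype α] (P : (Fin n → α) → ℝ) (v : Fin n) (a : α) : ℝ :=
  ∑ x : Fin n → α, if x v = a then P x else 0

/-- Marginal of a pmf on `Σⁿ` at the pair of coordinates `(u, v)`. -/
def marg2 {n : ℕ} {α : Type*} [Fintype α] (P : (Fin n → α) → ℝ) (u v : Fin n)
    (a b : α) : ℝ :=
  ∑ x : Fin n → α, if x u = a ∧ x v = b then P x else 0

/-- KL divergence `D(P‖Q)`; terms with `P x = 0` vanish automatically. -/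
def KL {β : Type*} [Fintype β] (P Q : β → ℝ) : ℝ :=
  ∑ x, P x * Real.log (P x / Q x)

/-- Shannon entropy; terms with `P x = 0` vanish automatically. -/
def ent {β : Type*} [Fintype β] (P : β → ℝ) : ℝ :=
  -∑ x, P x * Real.log (P x)

/-- Pairwise mutual information `I(X_u; X_v)` of coordinates `u, v` under `P`. -/
def miC {n : ℕ} {α : Type*} [Fintype α] (P : (Fin n → α) → ℝ) (u v : Fin n) : ℝ :=
  ∑ a, ∑ b, marg2 P u v a b *
    Real.log (marg2 P u v a b / (marg P u a * marg P v b))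

/-!
Both `P` and `P_T` are positive, so `D(P‖P_T) = -H(P) - E_P[log P_T]`. Writing each factor
`P_{(pa v,v)} / P_{pa v}` as `P_v` times the ratio `P_{(pa v,v)} / (P_{pa v} P_v)` gives
`log P_T(x) = Σ_v log P_v(x_v) + Σ_{v ≠ r} log (P_{(pa v,v)} / (P_{pa v} P_v))(x)`, whose
`P`-expectation is `-Σ_v H(P_v) + Σ_{v ≠ r} I(X_{pa v}; X_v)`. A tree on `n` vertices has `n - 1`
edges, so `v ↦ {pa v, v}` is a bijection from the non-root vertices onto `E(T)`: every edge
is counted exactly once.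
-/

namespace SimpleGraph

open Finset

variable {V : Type*} {T : SimpleGraph V} {r : V} {pa : V → V}

lemma adj_iff_of_edgeSet_eq_parent (hE : T.edgeSet = {e | ∃ v, v ≠ r ∧ e = s(pa v, v)})
    {u v : V} : T.Adj u v ↔ (v ≠ r ∧ u = pa v) ∨ (u ≠ r ∧ v = pa u) := by
  rw [← mem_edgeSet, hE]
  simp only [Set.mem_ofPred_eq, Sym2.eq_iff]
  constructor
  · rintro ⟨w, hw, ⟨rfl, rfl⟩ | ⟨rfl, rfl⟩⟩
    exacts [Or.inl ⟨hw, rfl⟩, Or.inr ⟨hw, rfl⟩]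
  · rintro (⟨hv, rfl⟩ | ⟨hu, rfl⟩)
    exacts [⟨v, hv, Or.inl ⟨rfl, rfl⟩⟩, ⟨u, hu, Or.inr ⟨rfl, rfl⟩⟩]

lemma parent_ne_of_edgeSet_eq_parent (hE : T.edgeSet = {e | ∃ v, v ≠ r ∧ e = s(pa v, v)})
    {v : V} (hv : v ≠ r) : pa v ≠ v :=
  ((adj_iff_of_edgeSet_eq_parent hE).mpr (Or.inl ⟨hv, rfl⟩)).ne

lemma IsTree.injOn_parent_edge [Fintype V] (hT : T.IsTree)
    (hE : T.edgeSet = {e | ∃ v, v ≠ r ∧ e = s(pa v, v)}) :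
    Set.InjOn (fun v => s(pa v, v)) {v | v ≠ r} := by
  have himage : (univ.erase r).image (fun v => s(pa v, v)) = T.edgeFinset := by
    ext e
    simp [hE, eq_comm]
  have hcard := hT.card_edgeFinset
  rw [← himage] at hcard
  have hinj : Set.InjOn (fun v => s(pa v, v)) ↑(univ.erase r) :=
    card_image_iff.mp (by rw [card_erase_of_mem (mem_univ r), card_univ]; omega)
  exact fun a ha b hb => hinj (by simpa using ha) (by simpa using hb)

lemma IsTree.parent_parent_ne [Fintype V] (hT : T.IsTree)
    (hE : T.edgeSet = {e | ∃ v, v ≠ r ∧ e = s(pa v, v)}) {u : V} (hu : u ≠ r)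
    (hpu : pa u ≠ r) : pa (pa u) ≠ u := fun h =>
  parent_ne_of_edgeSet_eq_parent hE hu
    (hT.injOn_parent_edge hE hpu hu
      (show s(pa (pa u), pa u) = s(pa u, u) by rw [h, Sym2.eq_swap]))

lemma IsTree.sum_adj_eq_sum_parent [Fintype V] [DecidableEq V] {M : Type*} [AddCommMonoid M]
    (hT : T.IsTree) (hE : T.edgeSet = {e | ∃ v, v ≠ r ∧ e = s(pa v, v)}) (f : V → V → M) :
    ∑ u, ∑ v, (if T.Adj u v then f u v else 0) =
      ∑ v ∈ univ.erase r, (f (pa v) v + f v (pa v)) := by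
  have hsplit : ∀ u v, (if T.Adj u v then f u v else 0) =
      (if v ≠ r ∧ u = pa v then f u v else 0) + (if u ≠ r ∧ v = pa u then f u v else 0) := by
    intro u v
    rw [adj_iff_of_edgeSet_eq_parent hE]
    by_cases hchild : v ≠ r ∧ u = pa v
    · have hparent : ¬(u ≠ r ∧ v = pa u) := by
        rintro ⟨hu, rfl⟩
        exact hT.parent_parent_ne hE hu hchild.1 hchild.2.symm
      rw [if_pos (Or.inl hchild), if_pos hchild, if_neg hparent, add_zero]
    · rw [if_neg hchild, zero_add]
      simp only [or_iff_right hchild]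
  simp_rw [hsplit, sum_add_distrib, ite_and]
  rw [sum_comm (f := fun u v => if v ≠ r then if u = pa v then f u v else 0 else 0),
    ← filter_ne', sum_filter, sum_filter]
  simp

end SimpleGraph

section Information

open Finset Real

lemma KL_eq_neg_ent_sub_sum_mul_log {β : Type*} [Fintype β] (P Q : β → ℝ)
    (hQ : ∀ x, P x ≠ 0 → Q x ≠ 0) : KL P Q = -ent P - ∑ x, P x * log (Q x) := by
  rw [KL, ent, neg_neg, ← sum_sub_distrib]
  refine sum_congr rfl fun x _ => ?_
  by_cases hPx : P x = 0
  · simp [hPx]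
  · rw [log_div hPx (hQ x hPx), mul_sub]

variable {n : ℕ} {α : Type*} [Fintype α] (P : (Fin n → α) → ℝ)

lemma sum_marg_mul (v : Fin n) (g : α → ℝ) :
    ∑ a, marg P v a * g a = ∑ x, P x * g (x v) := by
  simp only [marg, sum_mul, ite_mul, zero_mul]
  rw [sum_comm]
  simp

lemma sum_marg2_mul (u v : Fin n) (g : α → α → ℝ) :
    ∑ a, ∑ b, marg2 P u v a b * g a b = ∑ x, P x * g (x u) (x v) := by
  simp only [marg2, sum_mul, ite_mul, zero_mul]
  rw [sum_congr rfl fun a _ => sum_comm, sum_comm]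
  simp [ite_and]

lemma sum_mul_log_marg (v : Fin n) : ∑ x, P x * log (marg P v (x v)) = -ent (marg P v) := by
  rw [← sum_marg_mul P v fun a => log (marg P v a), ent, neg_neg]

lemma miC_eq_sum_mul_log (u v : Fin n) :
    miC P u v = ∑ x, P x * log (marg2 P u v (x u) (x v) / (marg P u (x u) * marg P v (x v))) :=
  sum_marg2_mul P u v fun a b => log (marg2 P u v a b / (marg P u a * marg P v b))

lemma marg2_comm (u v : Fin n) (a b : α) : marg2 P u v a b = marg2 P v u b a :=
  sum_congr rfl fun _ _ => if_congr and_comm rfl rfl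

lemma miC_comm (u v : Fin n) : miC P u v = miC P v u := by
  rw [miC, sum_comm]
  simp only [marg2_comm P u v, mul_comm (marg P u _)]
  rfl

variable {P}

lemma marg_pos (hP : ∀ x, 0 < P x) (v : Fin n) (a : α) : 0 < marg P v a :=
  sum_pos' (fun x _ => by split_ifs <;> simp [(hP x).le]) ⟨fun _ => a, mem_univ _, by simp [hP]⟩

lemma marg2_pos (hP : ∀ x, 0 < P x) {u v : Fin n} (huv : u ≠ v) (a b : α) :
    0 < marg2 P u v a b :=
  sum_pos' (fun x _ => by split_ifs <;> simp [(hP x).le])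
    ⟨Function.update (fun _ => a) v b, mem_univ _, by simp [Function.update_of_ne huv, hP]⟩

end Information

section TreeApprox

open Finset Real

variable {n : ℕ} {α : Type*} [Fintype α] (P : (Fin n → α) → ℝ) (r : Fin n) (pa : Fin n → Fin n)

/-- The `T`-structured distribution `P_T`. -/
def treeApprox (x : Fin n → α) : ℝ :=
  marg P r (x r) * ∏ v ∈ univ.filter (fun v => v ≠ r),
    marg2 P (pa v) v (x (pa v)) (x v) / marg P (pa v) (x (pa v))

variable {P r pa}

lemma treeApprox_pos (hP : ∀ x, 0 < P x) (hpa : ∀ v, v ≠ r → pa v ≠ v) (x : Fin n → α) :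
    0 < treeApprox P r pa x :=
  mul_pos (marg_pos hP r _) (prod_pos fun v hv =>
    div_pos (marg2_pos hP (hpa v (mem_filter.mp hv).2) _ _) (marg_pos hP _ _))

lemma log_treeApprox (hP : ∀ x, 0 < P x) (hpa : ∀ v, v ≠ r → pa v ≠ v) (x : Fin n → α) :
    log (treeApprox P r pa x) = ∑ v, log (marg P v (x v)) + ∑ v ∈ univ.erase r,
      log (marg2 P (pa v) v (x (pa v)) (x v) / (marg P (pa v) (x (pa v)) * marg P v (x v))) := by
  have hpmi : ∀ v ∈ univ.erase r,
      0 < marg2 P (pa v) v (x (pa v)) (x v) / (marg P (pa v) (x (pa v)) * marg P v (x v)) :=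
    fun v hv => div_pos (marg2_pos hP (hpa v (ne_of_mem_erase hv)) _ _)
      (mul_pos (marg_pos hP _ _) (marg_pos hP _ _))
  have hfactor : ∀ v ∈ univ.erase r,
      marg2 P (pa v) v (x (pa v)) (x v) / marg P (pa v) (x (pa v)) = marg P v (x v) *
        (marg2 P (pa v) v (x (pa v)) (x v) / (marg P (pa v) (x (pa v)) * marg P v (x v))) := by
    intro v _
    have := (marg_pos hP v (x v)).ne'
    field_simp
  rw [treeApprox, filter_ne', prod_congr rfl hfactor, prod_mul_distrib, ← mul_assoc,
    mul_prod_erase univ (fun v => marg P v (x v)) (mem_univ r),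
    log_mul (prod_pos fun v _ => marg_pos hP v _).ne' (prod_pos hpmi).ne',
    log_prod fun v _ => (marg_pos hP v _).ne',
    log_prod fun v hv => (hpmi v hv).ne']

lemma sum_mul_log_treeApprox (hP : ∀ x, 0 < P x) (hpa : ∀ v, v ≠ r → pa v ≠ v) :
    ∑ x, P x * log (treeApprox P r pa x) =
      -∑ v, ent (marg P v) + ∑ v ∈ univ.erase r, miC P (pa v) v := by
  simp_rw [log_treeApprox hP hpa, mul_add, mul_sum, sum_add_distrib]
  rw [sum_comm, sum_comm (s := univ) (t := univ.erase r)]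
  simp_rw [sum_mul_log_marg, ← miC_eq_sum_mul_log, sum_neg_distrib]

end TreeApprox

theorem stmt7_general {n : ℕ} {α : Type*} [Fintype α]
    (T : SimpleGraph (Fin n)) (hT : T.IsTree) (r : Fin n) (pa : Fin n → Fin n)
    (hE : T.edgeSet = {e | ∃ v, v ≠ r ∧ e = s(pa v, v)})
    (P : (Fin n → α) → ℝ) (hPpos : ∀ x, 0 < P x) :
    KL P (fun x => marg P r (x r) *
        ∏ v ∈ Finset.univ.filter (fun v => v ≠ r),
          marg2 P (pa v) v (x (pa v)) (x v) / marg P (pa v) (x (pa v))) =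
      ((∑ v, ent (fun a => marg P v a)) - ent P)
        - (1 / 2) * ∑ u : Fin n, ∑ v : Fin n,
            (if T.Adj u v then miC P u v else 0) := by
  have hpa : ∀ v, v ≠ r → pa v ≠ v := fun _ => SimpleGraph.parent_ne_of_edgeSet_eq_parent hE
  have hedges : ∑ u, ∑ v, (if T.Adj u v then miC P u v else 0) =
      2 * ∑ v ∈ Finset.univ.erase r, miC P (pa v) v := by
    rw [hT.sum_adj_eq_sum_parent hE, Finset.mul_sum]
    exact Finset.sum_congr rfl fun v _ => by rw [miC_comm P v, two_mul]
  change KL P (treeApprox P r pa) = _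
  rw [KL_eq_neg_ent_sub_sum_mul_log _ _ fun x _ => (treeApprox_pos hPpos hpa x).ne',
    sum_mul_log_treeApprox hPpos hpa, hedges]
  ring

/-- The Chow–Liu identity: `D(P‖P_T) = (Σ_v H(P_v) − H(P)) − Σ_{{u,v}∈E(T)} I(X_u;X_v)`.
The sum over undirected edges of `T` is written as half the sum over ordered
adjacent pairs (each edge contributes its mutual information once, since
`I(X_u;X_v) = I(X_v;X_u)`). -/
theorem stmt7 {n : ℕ} {α : Type*} [Fintype α]
    (T : SimpleGraph (Fin n)) (hT : T.IsTree) (r : Fin n) (pa : Fin n → Fin n)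
    (hE : T.edgeSet = {e | ∃ v, v ≠ r ∧ e = s(pa v, v)})
    (P : (Fin n → α) → ℝ) (hPpos : ∀ x, 0 < P x) (hP1 : ∑ x, P x = 1) :
    KL P (fun x => marg P r (x r) *
        ∏ v ∈ Finset.univ.filter (fun v => v ≠ r),
          marg2 P (pa v) v (x (pa v)) (x v) / marg P (pa v) (x (pa v))) =
      ((∑ v, ent (fun a => marg P v a)) - ent P)
        - (1 / 2) * ∑ u : Fin n, ∑ v : Fin n,
            (if T.Adj u v then miC P u v else 0) :=
  stmt7_general T hT r pa hE P hPpos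

end
end

section
/- There exists a universal constant C₃ > 0 such that the following holds. Let Σ be a finite set and P a pmf on Σ×Σ that is a product distribution (P(x,y) = P_X(x)·P_Y(y) for all x,y). Let P̂ be the empirical distribution of N > 1 i.i.d. samples from P. Then for every δ ∈ (0,1), with probability at least 1−δ, the empirical mutual information satisfies I(X̂;Ŷ) ≤ C₃·|Σ|²·(log N / N)·log(|Σ|/δ). -/
/-!
Method of types. A sample `s` with empirical distribution `P̂` has probability
`Pᴺ(s) = exp(-N·D(P̂‖P))·P̂ᴺ(s)`, and when `P = P_X ⊗ P_Y` the chain rule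
`D(P̂‖P) = I(P̂) + D(P̂_X‖P_X) + D(P̂_Y‖P_Y)` gives `D(P̂‖P) ≥ I(P̂)`. Under its own type `q`, a
type class has mass at most `1`, and there are at most `(N+1)^|Σ|²` types, so the samples with
`I(P̂) > t` have total mass at most `(N+1)^|Σ|² · exp(-N t)`, which is `≤ δ` for
`t = 5|Σ|²(log N / N) log(|Σ|/δ)` once `|Σ| ≥ 2`; when `|Σ| = 1` the empirical mutual
information vanishes.
-/

open scoped Classical

noncomputable section

/-- Probability of an event under a (finitely supported) density `p`. -/
def prob {Ω : Type*} [Fintype Ω] (p : Ω → ℝ) (E : Set Ω) : ℝ :=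
  ∑ ω, if ω ∈ E then p ω else 0

/-- Empirical probability of `a` among the `N` samples `s`. -/
def emp {α : Type*} (N : ℕ) (s : Fin N → α) (a : α) : ℝ :=
  ((Finset.univ.filter (fun j => s j = a)).card : ℝ) / N

/-- Mutual information of a pmf `Q` on `α × α`; terms with `Q z = 0` vanish. -/
def miP {α : Type*} [Fintype α] (Q : α × α → ℝ) : ℝ :=
  ∑ z : α × α, Q z * Real.log (Q z / ((∑ y, Q (z.1, y)) * (∑ x, Q (x, z.2))))

open Finset Real

section Empirical

variable {β : Type*} {N : ℕ}

lemma emp_nonneg (s : Fin N → β) (a : β) : 0 ≤ emp N s a := by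
  unfold emp; positivity

lemma emp_apply_pos (s : Fin N → β) (j : Fin N) : 0 < emp N s (s j) := by
  have hj : 0 < #{i | s i = s j} := card_pos.2 ⟨j, by simp⟩
  have hN : 0 < N := j.pos
  unfold emp; positivity

lemma prod_emp_nonneg (s : Fin N → β) : 0 ≤ ∏ j, emp N s (s j) :=
  prod_nonneg fun j _ => emp_nonneg s (s j)

lemma exists_eq_of_emp_pos {s : Fin N → β} {a : β} (h : 0 < emp N s a) : ∃ j, s j = a := by
  by_contra! hs
  simp [emp, hs] at h

lemma sum_comp_eq_mul_sum_emp_mul [Fintype β] (s : Fin N → β) (f : β → ℝ) :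
    ∑ j, f (s j) = N * ∑ a, emp N s a * f a := by
  rcases N.eq_zero_or_pos with rfl | hN
  · simp
  rw [← sum_fiberwise' univ s f, mul_sum]
  refine sum_congr rfl fun a _ => ?_
  rw [sum_const, nsmul_eq_mul, emp, ← mul_assoc, mul_div_cancel₀ _ (by positivity)]

lemma sum_emp [Fintype β] (hN : 0 < N) (s : Fin N → β) : ∑ a, emp N s a = 1 := by
  have h := sum_comp_eq_mul_sum_emp_mul s fun _ => 1
  simp only [sum_const, card_univ, Fintype.card_fin, nsmul_eq_mul, mul_one] at h
  exact (mul_eq_left₀ (by positivity)).1 h.symm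

lemma sum_emp_le_one [Fintype β] (s : Fin N → β) : ∑ a, emp N s a ≤ 1 := by
  rcases N.eq_zero_or_pos with rfl | hN
  · simp [emp]
  · exact (sum_emp hN s).le

end Empirical

section Probability

variable {Ω : Type*} [Fintype Ω]

lemma prob_le_sum_of_le {p g : Ω → ℝ} {E : Set Ω} (hg : ∀ ω, 0 ≤ g ω) (h : ∀ ω ∈ E, p ω ≤ g ω) :
    prob p E ≤ ∑ ω, g ω :=
  sum_le_sum fun ω _ => by
    split_ifs with hω
    exacts [h ω hω, hg ω]

lemma prob_compl (p : Ω → ℝ) (E : Set Ω) : prob p Eᶜ = ∑ ω, p ω - prob p E := by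
  rw [eq_sub_iff_add_eq, prob, prob, ← sum_add_distrib]
  exact sum_congr rfl fun ω _ => by by_cases hω : ω ∈ E <;> simp [hω]

end Probability

def relEntropy {β : Type*} [Fintype β] (q p : β → ℝ) : ℝ :=
  ∑ x, q x * log (q x / p x)

def marginalFst {α β : Type*} [Fintype β] (Q : α × β → ℝ) (x : α) : ℝ :=
  ∑ y, Q (x, y)

def marginalSnd {α β : Type*} [Fintype α] (Q : α × β → ℝ) (y : β) : ℝ :=
  ∑ x, Q (x, y)

theorem relEntropy_nonneg {β : Type*} [Fintype β] {q p : β → ℝ} (hq : ∀ x, 0 ≤ q x)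
    (hp : ∀ x, 0 ≤ p x) (hq1 : ∑ x, q x = 1) (hp1 : ∑ x, p x ≤ 1)
    (hqp : ∀ x, 0 < q x → 0 < p x) : 0 ≤ relEntropy q p := by
  have hterm : ∀ x, q x - p x ≤ q x * log (q x / p x) := fun x => by
    rcases (hq x).eq_or_lt with h | h
    · simp [← h, hp x]
    · have hlog := one_sub_inv_le_log_of_pos (div_pos h (hqp x h))
      rw [inv_div] at hlog
      calc q x - p x = q x * (1 - p x / q x) := by field_simp
        _ ≤ q x * log (q x / p x) := mul_le_mul_of_nonneg_left hlog h.le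
  calc 0 ≤ ∑ x, q x - ∑ x, p x := by linarith
    _ = ∑ x, (q x - p x) := (sum_sub_distrib _ _).symm
    _ ≤ relEntropy q p := sum_le_sum fun x _ => hterm x

section Marginals

variable {α β : Type*} {Q : α × β → ℝ}

lemma marginalFst_nonneg [Fintype β] (hQ : ∀ z, 0 ≤ Q z) (x : α) : 0 ≤ marginalFst Q x :=
  sum_nonneg fun y _ => hQ (x, y)

lemma marginalSnd_nonneg [Fintype α] (hQ : ∀ z, 0 ≤ Q z) (y : β) : 0 ≤ marginalSnd Q y :=
  sum_nonneg fun x _ => hQ (x, y)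

lemma le_marginalFst [Fintype β] (hQ : ∀ z, 0 ≤ Q z) (z : α × β) : Q z ≤ marginalFst Q z.1 :=
  single_le_sum (f := fun y => Q (z.1, y)) (fun _ _ => hQ _) (mem_univ z.2)

lemma le_marginalSnd [Fintype α] (hQ : ∀ z, 0 ≤ Q z) (z : α × β) : Q z ≤ marginalSnd Q z.2 :=
  single_le_sum (f := fun x => Q (x, z.2)) (fun _ _ => hQ _) (mem_univ z.1)

lemma sum_marginalFst [Fintype α] [Fintype β] : ∑ x, marginalFst Q x = ∑ z, Q z :=
  (Fintype.sum_prod_type Q).symm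

lemma sum_marginalSnd [Fintype α] [Fintype β] : ∑ y, marginalSnd Q y = ∑ z, Q z :=
  (Fintype.sum_prod_type_right Q).symm

lemma exists_pos_of_marginalFst_pos [Fintype β] {x : α} (h : 0 < marginalFst Q x) :
    ∃ y, 0 < Q (x, y) := by
  by_contra! hQ
  exact h.not_ge (sum_nonpos fun y _ => hQ y)

lemma exists_pos_of_marginalSnd_pos [Fintype α] {y : β} (h : 0 < marginalSnd Q y) :
    ∃ x, 0 < Q (x, y) := by
  by_contra! hQ
  exact h.not_ge (sum_nonpos fun x _ => hQ x)

end Marginals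

section ChainRule

variable {α : Type*} [Fintype α] {Q : α × α → ℝ} {a b : α → ℝ}

theorem relEntropy_prod_eq_miP_add (hQ : ∀ z, 0 ≤ Q z) (ha : ∀ x, 0 ≤ a x) (hb : ∀ y, 0 ≤ b y)
    (hQab : ∀ z, 0 < Q z → 0 < a z.1 * b z.2) :
    relEntropy Q (fun z => a z.1 * b z.2) =
      miP Q + (relEntropy (marginalFst Q) a + relEntropy (marginalSnd Q) b) := by
  have hterm : ∀ z, Q z * log (Q z / (a z.1 * b z.2)) =
      Q z * log (Q z / (marginalFst Q z.1 * marginalSnd Q z.2)) +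
        (Q z * log (marginalFst Q z.1 / a z.1) + Q z * log (marginalSnd Q z.2 / b z.2)) := by
    intro z
    rcases (hQ z).eq_or_lt with h | h
    · simp [← h]
    have hX := h.trans_le (le_marginalFst hQ z)
    have hY := h.trans_le (le_marginalSnd hQ z)
    have ha' := pos_of_mul_pos_left (hQab z h) (hb _)
    have hb' := pos_of_mul_pos_right (hQab z h) (ha _)
    rw [← mul_add, ← mul_add, ← log_mul (by positivity) (by positivity),
      ← log_mul (by positivity) (by positivity)]
    congr 2
    field_simp
  have hfst : ∑ z : α × α, Q z * log (marginalFst Q z.1 / a z.1) =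
      relEntropy (marginalFst Q) a := by
    simp only [Fintype.sum_prod_type, ← sum_mul, relEntropy, marginalFst]
  have hsnd : ∑ z : α × α, Q z * log (marginalSnd Q z.2 / b z.2) =
      relEntropy (marginalSnd Q) b := by
    simp only [Fintype.sum_prod_type_right, ← sum_mul, relEntropy, marginalSnd]
  rw [← hfst, ← hsnd, ← sum_add_distrib, miP, ← sum_add_distrib]
  exact sum_congr rfl fun z _ => hterm z

theorem miP_le_relEntropy_prod (hQ : ∀ z, 0 ≤ Q z) (hQ1 : ∑ z, Q z = 1) (ha : ∀ x, 0 ≤ a x)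
    (hb : ∀ y, 0 ≤ b y) (ha1 : ∑ x, a x ≤ 1) (hb1 : ∑ y, b y ≤ 1)
    (hQab : ∀ z, 0 < Q z → 0 < a z.1 * b z.2) :
    miP Q ≤ relEntropy Q (fun z => a z.1 * b z.2) := by
  have hfst : 0 ≤ relEntropy (marginalFst Q) a := by
    refine relEntropy_nonneg (marginalFst_nonneg hQ) ha (sum_marginalFst.trans hQ1) ha1
      fun x hx => ?_
    obtain ⟨y, hy⟩ := exists_pos_of_marginalFst_pos hx
    exact pos_of_mul_pos_left (hQab _ hy) (hb y)
  have hsnd : 0 ≤ relEntropy (marginalSnd Q) b := by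
    refine relEntropy_nonneg (marginalSnd_nonneg hQ) hb (sum_marginalSnd.trans hQ1) hb1
      fun y hy => ?_
    obtain ⟨x, hx⟩ := exists_pos_of_marginalSnd_pos hy
    exact pos_of_mul_pos_right (hQab _ hx) (ha x)
  rw [relEntropy_prod_eq_miP_add hQ ha hb hQab]
  linarith

end ChainRule

section Likelihood

variable {β : Type*} [Fintype β] {N : ℕ}

theorem prod_eq_exp_neg_mul_relEntropy_mul_prod_emp (P : β → ℝ) (s : Fin N → β)
    (hP : ∀ j, 0 < P (s j)) :
    ∏ j, P (s j) = exp (-(N * relEntropy (emp N s) P)) * ∏ j, emp N s (s j) :=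
  calc ∏ j, P (s j) = ∏ j, exp (-log (emp N s (s j) / P (s j))) * emp N s (s j) :=
        prod_congr rfl fun j _ => by
          rw [exp_neg, exp_log (div_pos (emp_apply_pos s j) (hP j)), inv_div,
            div_mul_cancel₀ _ (emp_apply_pos s j).ne']
    _ = exp (-∑ j, log (emp N s (s j) / P (s j))) * ∏ j, emp N s (s j) := by
        rw [prod_mul_distrib, ← exp_sum, sum_neg_distrib]
    _ = exp (-(N * relEntropy (emp N s) P)) * ∏ j, emp N s (s j) := by
        rw [sum_comp_eq_mul_sum_emp_mul s fun a => log (emp N s a / P a)]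
        rfl

theorem sum_prod_filter_emp_eq_le_one (N : ℕ) (q : β → ℝ) :
    ∑ s with emp N s = q, ∏ j, q (s j) ≤ 1 := by
  rcases eq_empty_or_nonempty (univ.filter fun s : Fin N → β => emp N s = q) with h | ⟨s₀, hs₀⟩
  · rw [h, sum_empty]
    exact zero_le_one
  have hq : emp N s₀ = q := (mem_filter.1 hs₀).2
  have hq0 : ∀ a, 0 ≤ q a := hq ▸ emp_nonneg s₀
  calc ∑ s with emp N s = q, ∏ j, q (s j)
      ≤ ∑ s : Fin N → β, ∏ j, q (s j) :=
        sum_le_sum_of_subset_of_nonneg (filter_subset _ _) fun s _ _ =>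
          prod_nonneg fun j _ => hq0 (s j)
    _ = (∑ a, q a) ^ N := (Fintype.sum_pow _ _).symm
    _ ≤ 1 := pow_le_one₀ (sum_nonneg fun a _ => hq0 a) (hq ▸ sum_emp_le_one s₀)

theorem sum_prod_emp_le (N : ℕ) :
    ∑ s : Fin N → β, ∏ j, emp N s (s j) ≤ ((N : ℝ) + 1) ^ Fintype.card β := by
  set types : Finset (β → ℝ) := univ.image fun (c : β → Fin (N + 1)) a => (c a : ℝ) / N
  have hmaps : ∀ s ∈ (univ : Finset (Fin N → β)), emp N s ∈ types := fun s _ =>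
    mem_image.2 ⟨fun a => ⟨#{j | s j = a}, Nat.lt_succ_of_le (card_le_univ _ |>.trans_eq
      (Fintype.card_fin N))⟩, mem_univ _, rfl⟩
  calc ∑ s : Fin N → β, ∏ j, emp N s (s j)
      = ∑ q ∈ types, ∑ s with emp N s = q, ∏ j, q (s j) := by
        rw [← sum_fiberwise_of_maps_to hmaps]
        exact sum_congr rfl fun q _ => sum_congr rfl fun s hs => by rw [(mem_filter.1 hs).2]
    _ ≤ ∑ _q ∈ types, 1 := sum_le_sum fun q _ => sum_prod_filter_emp_eq_le_one N q
    _ ≤ #(univ : Finset (β → Fin (N + 1))) := by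
        rw [sum_const, nsmul_one]
        exact_mod_cast card_image_le
    _ = ((N : ℝ) + 1) ^ Fintype.card β := by simp

end Likelihood

section Tail

variable {α : Type*} [Fintype α] {N : ℕ}

theorem miP_eq_zero_of_subsingleton [Subsingleton α] {Q : α × α → ℝ} (hQ : ∑ z, Q z = 1) :
    miP Q = 0 := by
  have hQz : ∀ z, Q z = 1 := fun z => by rwa [Fintype.sum_subsingleton _ z] at hQ
  refine sum_eq_zero fun z _ => ?_
  rw [Fintype.sum_subsingleton _ z.2, Fintype.sum_subsingleton _ z.1]
  simp [hQz]

theorem prob_lt_miP_emp_eq_zero [Subsingleton α] (hN : 0 < N) (p : (Fin N → α × α) → ℝ)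
    {t : ℝ} (ht : 0 ≤ t) : prob p {s | t < miP (emp N s)} = 0 := by
  have hempty : {s : Fin N → α × α | t < miP (emp N s)} = ∅ :=
    Set.eq_empty_of_forall_notMem fun s hs =>
      (miP_eq_zero_of_subsingleton (sum_emp hN s) ▸ ht).not_gt hs
  simp [hempty, prob]

theorem prod_le_exp_neg_mul_miP_mul_prod_emp (hN : 0 < N) {P : α × α → ℝ}
    (hP0 : ∀ z, 0 ≤ P z) (hP1 : ∑ z, P z = 1)
    (hprod : ∀ z, P z = marginalFst P z.1 * marginalSnd P z.2)
    (s : Fin N → α × α) :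
    ∏ j, P (s j) ≤ exp (-(N * miP (emp N s))) * ∏ j, emp N s (s j) := by
  by_cases hpos : ∀ j, 0 < P (s j)
  swap
  · obtain ⟨j, hj⟩ := not_forall.1 hpos
    rw [prod_eq_zero (mem_univ j) (le_antisymm (not_lt.1 hj) (hP0 _))]
    exact mul_nonneg (exp_nonneg _) (prod_emp_nonneg s)
  have hP : (fun z : α × α => marginalFst P z.1 * marginalSnd P z.2) = P :=
    funext fun z => (hprod z).symm
  have hmi : miP (emp N s) ≤ relEntropy (emp N s) P := by
    rw [← hP]
    refine miP_le_relEntropy_prod (emp_nonneg s) (sum_emp hN s) (marginalFst_nonneg hP0)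
      (marginalSnd_nonneg hP0) (sum_marginalFst.trans hP1).le (sum_marginalSnd.trans hP1).le
      fun z hz => ?_
    obtain ⟨j, rfl⟩ := exists_eq_of_emp_pos hz
    exact hprod (s j) ▸ hpos j
  rw [prod_eq_exp_neg_mul_relEntropy_mul_prod_emp P s hpos]
  exact mul_le_mul_of_nonneg_right (by gcongr) (prod_emp_nonneg s)

theorem prob_lt_miP_emp_le (hN : 0 < N) {P : α × α → ℝ} (hP0 : ∀ z, 0 ≤ P z)
    (hP1 : ∑ z, P z = 1)
    (hprod : ∀ z, P z = marginalFst P z.1 * marginalSnd P z.2) (t : ℝ) :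
    prob (fun s : Fin N → α × α => ∏ j, P (s j)) {s | t < miP (emp N s)} ≤
      exp (-(N * t)) * ((N : ℝ) + 1) ^ (Fintype.card α ^ 2) :=
  calc prob (fun s : Fin N → α × α => ∏ j, P (s j)) {s | t < miP (emp N s)}
      ≤ ∑ s : Fin N → α × α, exp (-(N * t)) * ∏ j, emp N s (s j) :=
        prob_le_sum_of_le (fun s => mul_nonneg (exp_nonneg _) (prod_emp_nonneg s)) fun s hs =>
          (prod_le_exp_neg_mul_miP_mul_prod_emp hN hP0 hP1 hprod s).trans <|
            mul_le_mul_of_nonneg_right (by gcongr; exact hs.le) (prod_emp_nonneg s)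
    _ = exp (-(N * t)) * ∑ s : Fin N → α × α, ∏ j, emp N s (s j) := (mul_sum _ _ _).symm
    _ ≤ exp (-(N * t)) * ((N : ℝ) + 1) ^ (Fintype.card α ^ 2) := by
        gcongr
        simpa [Fintype.card_prod, sq] using sum_prod_emp_le (β := α × α) N

end Tail

theorem exp_neg_mul_mul_pow_le {k N : ℕ} (hk : 2 ≤ k) (hN : 2 ≤ N) {δ : ℝ}
    (hδ : δ ∈ Set.Ioo 0 1) :
    exp (-(N * (5 * (k : ℝ) ^ 2 * (log N / N) * log (k / δ)))) * ((N : ℝ) + 1) ^ (k ^ 2) ≤ δ := by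
  obtain ⟨hδ0, hδ1⟩ := hδ
  have hN2 : (2 : ℝ) ≤ N := by exact_mod_cast hN
  have hk2 : (2 : ℝ) ≤ k := by exact_mod_cast hk
  have hlog2 : 1 / 2 < log 2 := by linarith [log_two_gt_d9]
  have ha : log 2 ≤ log N := log_le_log (by norm_num) hN2
  have hb : log 2 ≤ log (k / δ) :=
    log_le_log (by norm_num) ((le_div_iff₀ hδ0).2 (by nlinarith))
  have hlogδ : -log δ ≤ log (k / δ) := by
    rw [log_div (by positivity) hδ0.ne']
    linarith [log_nonneg (by linarith : (1 : ℝ) ≤ k)]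
  have hN1 : log (N + 1) ≤ 2 * log N := by
    rw [← log_rpow (by positivity)]
    exact log_le_log (by positivity) (by norm_num; nlinarith)
  have hK : (4 : ℝ) ≤ (k : ℝ) ^ 2 := by nlinarith
  have hNt : (N : ℝ) * (5 * (k : ℝ) ^ 2 * (log N / N) * log (k / δ)) =
      5 * (k : ℝ) ^ 2 * log N * log (k / δ) := by
    field_simp
  rw [mul_comm, ← exp_log (pow_pos (by positivity : (0 : ℝ) < N + 1) _), ← exp_add,
    ← le_log_iff_exp_le hδ0, log_pow, hNt]
  push_cast
  linarith [mul_le_mul_of_nonneg_left hN1 (by positivity : (0 : ℝ) ≤ (k : ℝ) ^ 2),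
    mul_nonneg (mul_nonneg (by positivity : (0 : ℝ) ≤ (k : ℝ) ^ 2) (by linarith : 0 ≤ log N))
      (by linarith : 0 ≤ 2 * log (k / δ) - 1),
    mul_nonneg (by linarith : 0 ≤ log (k / δ))
      (by nlinarith : 0 ≤ (k : ℝ) ^ 2 * log N - 1)]

/-- Soundness for mutual information (Corollary 4.8): if `P` is a product
distribution then the empirical mutual information is small whp. -/
theorem stmt12 :
    ∃ C₃ : ℝ, 0 < C₃ ∧
      ∀ (α : Type) [Fintype α], ∀ P : α × α → ℝ,
        (∀ z, 0 ≤ P z) → (∑ z, P z = 1) →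
        (∀ z : α × α, P z = (∑ y, P (z.1, y)) * (∑ x, P (x, z.2))) →
        ∀ (N : ℕ), 1 < N →
        ∀ δ : ℝ, δ ∈ Set.Ioo (0 : ℝ) 1 →
        1 - δ ≤
          prob (fun s : Fin N → α × α => ∏ j, P (s j))
            {s |
              miP (fun z => emp N s z) ≤
                C₃ * (Fintype.card α : ℝ) ^ 2 * (Real.log N / N) *
                  Real.log (Fintype.card α / δ)} := by
  refine ⟨5, by norm_num, fun α _ P hP0 hP1 hprod N hN δ hδ => ?_⟩
  set t := 5 * (Fintype.card α : ℝ) ^ 2 * (log N / N) * log (Fintype.card α / δ)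
  have hgood : {s : Fin N → α × α | miP (emp N s) ≤ t} = {s | t < miP (emp N s)}ᶜ := by
    ext s
    simp
  have htotal : ∑ s : Fin N → α × α, ∏ j, P (s j) = 1 := by
    rw [← Fintype.sum_pow, hP1, one_pow]
  suffices hbad : prob (fun s : Fin N → α × α => ∏ j, P (s j)) {s | t < miP (emp N s)} ≤ δ by
    rw [hgood, prob_compl, htotal]
    linarith
  rcases le_or_gt (Fintype.card α) 1 with hk | hk
  · have : Subsingleton α := Fintype.card_le_one_iff_subsingleton.1 hk
    have : Nonempty α := by
      by_contra h
      simp [not_nonempty_iff.1 h] at hP1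
    have hlog : 0 ≤ log (Fintype.card α / δ) := by
      rw [le_antisymm hk Fintype.card_pos, Nat.cast_one]
      exact log_nonneg (one_le_one_div hδ.1 hδ.2.le)
    have ht : 0 ≤ t := by
      have := log_natCast_nonneg N
      positivity
    rw [prob_lt_miP_emp_eq_zero (by omega) _ ht]
    exact hδ.1.le
  · exact (prob_lt_miP_emp_le (by omega) hP0 hP1 hprod t).trans (exp_neg_mul_mul_pow_le hk hN hδ)

end
end
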